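/- arXiv:2301.04894 — 6 statements merged into one kernel-verified Lean document; each statement's English description precedes it below -/
import Mathlib

section
/- Let a > 0 and let f : (0, ∞) → ℝ be differentiable such that r ↦ r⁴ · f'(r) is nondecreasing with limit 3a³ as r → ∞, and such that f(r) → 1 as r → ∞. Then f(r) ≥ 1 - a³/r³ for every r > 0. -/
/-! Since `r ↦ r⁴ f'(r)` increases to `3a³`, we have `f' ≤ 3a³/r⁴ = -(a³/r³)'`, so
`f + a³/r³` is antitone on `(0, ∞)`. It tends to `1` at infinity, hence stays `≥ 1`. -/

open Set Filter Topology

theorem MonotoneOn.le_of_tendsto_atTop {α β : Type*} [TopologicalSpace α] [Preorder α]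
    [OrderClosedTopology α] [Preorder β] [IsDirectedOrder β] {g : β → α} {a : α} {b : β}
    (hg : MonotoneOn g (Ici b)) (ha : Tendsto g atTop (𝓝 a)) : g b ≤ a :=
  haveI : Nonempty β := ⟨b⟩
  ge_of_tendsto ha <| (eventually_ge_atTop b).mono fun _ hx => hg self_mem_Ici hx hx

theorem AntitoneOn.ge_of_tendsto_atTop {α β : Type*} [TopologicalSpace α] [Preorder α]
    [OrderClosedTopology α] [Preorder β] [IsDirectedOrder β] {g : β → α} {a : α} {b : β}
    (hg : AntitoneOn g (Ici b)) (ha : Tendsto g atTop (𝓝 a)) : a ≤ g b :=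
  hg.dual_right.le_of_tendsto_atTop ha

theorem Convex.antitoneOn_of_hasDerivAt_nonpos {D : Set ℝ} (hD : Convex ℝ D) {g g' : ℝ → ℝ}
    (hg : ∀ x ∈ D, HasDerivAt g (g' x) x) (hg' : ∀ x ∈ D, g' x ≤ 0) : AntitoneOn g D :=
  antitoneOn_of_hasDerivWithinAt_nonpos hD
    (fun x hx => (hg x hx).continuousAt.continuousWithinAt)
    (fun x hx => (hg x (interior_subset hx)).hasDerivWithinAt)
    (fun x hx => hg' x (interior_subset hx))

theorem hasDerivAt_const_div_pow (c : ℝ) (n : ℕ) {x : ℝ} (hx : x ≠ 0) :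
    HasDerivAt (fun y => c / y ^ n) (-(n * c) / x ^ (n + 1)) x := by
  have h := ((hasDerivAt_pow n x).inv (pow_ne_zero n hx)).const_mul c
  simp only [Pi.inv_apply, ← div_eq_mul_inv] at h
  refine h.congr_deriv ?_
  rcases n with _ | n
  · simp
  · rw [Nat.add_sub_cancel]
    field_simp
    ring

theorem stmt_1_general (a : ℝ) (f f' : ℝ → ℝ)
    (hderiv : ∀ r ∈ Set.Ioi (0:ℝ), HasDerivAt f (f' r) r)
    (hmono : MonotoneOn (fun r => r ^ 4 * f' r) (Set.Ioi (0:ℝ)))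
    (hlim : Filter.Tendsto (fun r => r ^ 4 * f' r) Filter.atTop (nhds (3 * a ^ 3)))
    (hf1 : Filter.Tendsto f Filter.atTop (nhds 1)) :
    ∀ r ∈ Set.Ioi (0:ℝ), 1 - a ^ 3 / r ^ 3 ≤ f r := by
  have hbound : ∀ s ∈ Ioi (0:ℝ), f' s ≤ 3 * a ^ 3 / s ^ 4 := fun s hs => by
    have hs_pos : (0:ℝ) < s := hs
    rw [le_div_iff₀ (by positivity), mul_comm]
    exact (hmono.mono (Ici_subset_Ioi.2 hs_pos)).le_of_tendsto_atTop hlim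
  have hanti : AntitoneOn (fun s => f s + a ^ 3 / s ^ 3) (Ioi 0) := by
    refine (convex_Ioi 0).antitoneOn_of_hasDerivAt_nonpos
      (fun s hs => (hderiv s hs).add (hasDerivAt_const_div_pow _ 3 (ne_of_gt hs))) fun s hs => ?_
    have hf's := hbound s hs
    push_cast
    rw [neg_div]
    linarith
  have hlim' : Tendsto (fun s => f s + a ^ 3 / s ^ 3) atTop (𝓝 1) := by
    simpa using hf1.add (tendsto_const_nhds.div_atTop (tendsto_pow_atTop three_ne_zero))
  intro r hr
  have hge := (hanti.mono (Ici_subset_Ioi.2 hr)).ge_of_tendsto_atTop hlim'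
  linarith

theorem stmt_1 (a : ℝ) (ha : 0 < a) (f f' : ℝ → ℝ)
    (hderiv : ∀ r ∈ Set.Ioi (0:ℝ), HasDerivAt f (f' r) r)
    (hmono : MonotoneOn (fun r => r ^ 4 * f' r) (Set.Ioi (0:ℝ)))
    (hlim : Filter.Tendsto (fun r => r ^ 4 * f' r) Filter.atTop (nhds (3 * a ^ 3)))
    (hf1 : Filter.Tendsto f Filter.atTop (nhds 1)) :
    ∀ r ∈ Set.Ioi (0:ℝ), 1 - a ^ 3 / r ^ 3 ≤ f r :=
  stmt_1_general a f f' hderiv hmono hlim hf1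
end

section
/- For all real numbers 0 < a ≤ b, the integral ∫_a^b [ (1 - a³/b³)² - (1 - a³/r³)² ] · r² dr is at most 2 a³ · log(b/a). -/
theorem stmt_2 (a b : ℝ) (ha : 0 < a) (hab : a ≤ b) :
    ∫ r in a..b, ((1 - a ^ 3 / b ^ 3) ^ 2 - (1 - a ^ 3 / r ^ 3) ^ 2) * r ^ 2
      ≤ 2 * a ^ 3 * Real.log (b / a) := by
  have hb : 0 < b := lt_of_lt_of_le ha hab
  have hne : ∀ x ∈ Set.uIcc a b, x ≠ 0 := by
    intro x hx
    rw [Set.uIcc_of_le hab] at hx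
    exact (lt_of_lt_of_le ha hx.1).ne'
  have hInt1 : IntervalIntegrable
      (fun r => ((1 - a ^ 3 / b ^ 3) ^ 2 - (1 - a ^ 3 / r ^ 3) ^ 2) * r ^ 2)
      MeasureTheory.volume a b := by
    apply ContinuousOn.intervalIntegrable
    apply ContinuousOn.mul _ ((continuous_pow 2).continuousOn)
    apply ContinuousOn.sub continuousOn_const
    apply ContinuousOn.pow
    apply ContinuousOn.sub continuousOn_const
    exact ContinuousOn.div continuousOn_const ((continuous_pow 3).continuousOn)
      (fun x hx => pow_ne_zero 3 (hne x hx))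
  have hInt2 : IntervalIntegrable (fun r => 2 * a ^ 3 / r) MeasureTheory.volume a b := by
    apply ContinuousOn.intervalIntegrable
    exact ContinuousOn.div continuousOn_const continuousOn_id hne
  have key : ∀ r ∈ Set.Icc a b,
      ((1 - a ^ 3 / b ^ 3) ^ 2 - (1 - a ^ 3 / r ^ 3) ^ 2) * r ^ 2 ≤ 2 * a ^ 3 / r := by
    intro r hr
    have hr0 : 0 < r := lt_of_lt_of_le ha hr.1
    have ht : a ^ 3 / b ^ 3 ≤ 1 :=
      (div_le_one (by positivity)).mpr (pow_le_pow_left₀ ha.le hab 3)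
    have ht0 : 0 ≤ a ^ 3 / b ^ 3 := by positivity
    have hs0 : 0 ≤ a ^ 3 / r ^ 3 := by positivity
    have h2 : (1 - a ^ 3 / b ^ 3) ^ 2 ≤ 1 := by nlinarith
    have h3 : 1 - 2 * (a ^ 3 / r ^ 3) ≤ (1 - a ^ 3 / r ^ 3) ^ 2 := by
      nlinarith [sq_nonneg (a ^ 3 / r ^ 3)]
    have h4 : (1 - a ^ 3 / b ^ 3) ^ 2 - (1 - a ^ 3 / r ^ 3) ^ 2 ≤ 2 * (a ^ 3 / r ^ 3) := by
      linarith
    calc ((1 - a ^ 3 / b ^ 3) ^ 2 - (1 - a ^ 3 / r ^ 3) ^ 2) * r ^ 2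
        ≤ 2 * (a ^ 3 / r ^ 3) * r ^ 2 :=
          mul_le_mul_of_nonneg_right h4 (by positivity)
      _ = 2 * a ^ 3 / r := by field_simp
  have hmono := intervalIntegral.integral_mono_on hab hInt1 hInt2 key
  refine hmono.trans ?_
  have : ∫ r in a..b, 2 * a ^ 3 / r = 2 * a ^ 3 * Real.log (b / a) := by
    simp_rw [div_eq_mul_inv]
    rw [intervalIntegral.integral_const_mul, integral_inv_of_pos ha hb, div_eq_mul_inv]
  rw [this]
end

section
/- For all real numbers 0 < a ≤ b, the integral ∫_a^b [ (1 - a³/b³)² - (1 - a³/r³)² ] · r⁴ dr is at most a³ · b². -/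
/-
On `[a, b]` the integrand is at most `2 (a/r)³ r⁴ = 2 a³ r`, because `(1 - y)² ≤ 1` and
`1 - (1 - x)² ≤ 2x`; integrating gives `a³ (b² - a²) ≤ a³ b²`.
-/

lemma sq_one_sub_sub_sq_one_sub_le {x y : ℝ} (hy₀ : 0 ≤ y) (hy₂ : y ≤ 2) :
    (1 - y) ^ 2 - (1 - x) ^ 2 ≤ 2 * x := by
  nlinarith [sq_nonneg x]

lemma scattering_integrand_le {a r y : ℝ} (hr : 0 < r) (hy₀ : 0 ≤ y) (hy₂ : y ≤ 2) :
    ((1 - y) ^ 2 - (1 - a ^ 3 / r ^ 3) ^ 2) * r ^ 4 ≤ 2 * a ^ 3 * r :=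
  calc ((1 - y) ^ 2 - (1 - a ^ 3 / r ^ 3) ^ 2) * r ^ 4
      ≤ 2 * (a ^ 3 / r ^ 3) * r ^ 4 := by
        gcongr
        exact sq_one_sub_sub_sq_one_sub_le hy₀ hy₂
    _ = 2 * a ^ 3 * r := by field_simp

lemma intervalIntegrable_scattering_integrand {a b : ℝ} (c : ℝ) (ha : 0 < a) (hab : a ≤ b) :
    IntervalIntegrable (fun r ↦ (c - (1 - a ^ 3 / r ^ 3) ^ 2) * r ^ 4) MeasureTheory.volume a b := by
  refine ContinuousOn.intervalIntegrable ?_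
  rw [Set.uIcc_of_le hab]
  have hpos : ∀ r ∈ Set.Icc a b, r ^ 3 ≠ 0 := fun r hr ↦ (pow_pos (ha.trans_le hr.1) 3).ne'
  fun_prop (disch := exact hpos)

theorem stmt_3 (a b : ℝ) (ha : 0 < a) (hab : a ≤ b) :
    ∫ r in a..b, ((1 - a ^ 3 / b ^ 3) ^ 2 - (1 - a ^ 3 / r ^ 3) ^ 2) * r ^ 4
      ≤ a ^ 3 * b ^ 2 := by
  have hb : 0 < b := ha.trans_le hab
  have hy₁ : a ^ 3 / b ^ 3 ≤ 1 := div_le_one_of_le₀ (by gcongr) (by positivity)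
  calc ∫ r in a..b, ((1 - a ^ 3 / b ^ 3) ^ 2 - (1 - a ^ 3 / r ^ 3) ^ 2) * r ^ 4
      ≤ ∫ r in a..b, 2 * a ^ 3 * r :=
        intervalIntegral.integral_mono_on hab (intervalIntegrable_scattering_integrand _ ha hab)
          ((continuous_const.mul continuous_id).intervalIntegrable _ _) fun r hr ↦
            scattering_integrand_le (ha.trans_le hr.1) (by positivity) (by linarith)
    _ = a ^ 3 * (b ^ 2 - a ^ 2) := by
        rw [intervalIntegral.integral_const_mul, integral_id]
        ring
    _ ≤ a ^ 3 * b ^ 2 := by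
        gcongr
        exact sub_le_self _ (sq_nonneg a)
end

section
/- Let 0 < a ≤ b and let f : [0, b] → ℝ be continuously differentiable with 0 ≤ f(r) ≤ 1 for all r, f(b) = 1, and f(r) ≥ 1 − a³/r³ for all r ∈ [a, b]. Then ∫_0^b r f(r) f'(r) dr ≤ a. -/
/-!
Differentiating `r * f r ^ 2` gives `∫₀ᵇ f² + 2 ∫₀ᵇ r f f' = b f(b)² = b`, so it suffices to show
`∫₀ᵇ f² ≥ b - 2a`. On `[a, b]` we have `f² ≥ (1 - a³/r³)² ≥ 1 - 2a³/r³`, whose integral is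
`b - 2a + a³/b²`, and the contribution of `[0, a]` is nonnegative.
-/

open Set MeasureTheory intervalIntegral

theorem integral_sq_add_two_mul_integral_mul_mul_deriv {f f' : ℝ → ℝ} {a b : ℝ}
    (hf : ∀ r ∈ uIcc a b, HasDerivAt f (f' r) r) (hf' : ContinuousOn f' (uIcc a b)) :
    (∫ r in a..b, f r ^ 2) + 2 * ∫ r in a..b, r * f r * f' r = b * f b ^ 2 - a * f a ^ 2 := by
  have hfc : ContinuousOn f (uIcc a b) := fun r hr => (hf r hr).continuousAt.continuousWithinAt
  have hsq : IntervalIntegrable (fun r => f r ^ 2) volume a b := (hfc.pow 2).intervalIntegrable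
  have hcross : IntervalIntegrable (fun r => 2 * (r * f r * f' r)) volume a b :=
    (continuousOn_const.mul ((continuousOn_id.mul hfc).mul hf')).intervalIntegrable
  rw [← intervalIntegral.integral_const_mul, ← integral_add hsq hcross]
  refine integral_eq_sub_of_hasDerivAt (f := fun r => r * f r ^ 2) (fun r hr => ?_)
    (hsq.add hcross)
  exact ((hasDerivAt_id' r).mul ((hf r hr).pow 2)).congr_deriv (by simp only [Pi.pow_apply]; ring)

theorem hasDerivAt_add_div_sq (c : ℝ) {r : ℝ} (hr : r ≠ 0) :
    HasDerivAt (fun r => r + c / r ^ 2) (1 - 2 * c / r ^ 3) r := by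
  refine ((hasDerivAt_id' r).add ((hasDerivAt_const r c).div (hasDerivAt_pow 2 r)
    (pow_ne_zero 2 hr))).congr_deriv ?_
  field_simp
  ring

section

variable {a b : ℝ}

theorem intervalIntegrable_one_sub_two_mul_div_cube (ha : 0 < a) (hab : a ≤ b) :
    IntervalIntegrable (fun r => 1 - 2 * a ^ 3 / r ^ 3) volume a b := by
  refine ContinuousOn.intervalIntegrable fun r hr => ?_
  have hr : 0 < r := ha.trans_le (uIcc_of_le hab ▸ hr).1
  exact (continuousAt_const.sub (continuousAt_const.div (continuousAt_id.pow 3)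
    (pow_ne_zero 3 hr.ne'))).continuousWithinAt

theorem integral_one_sub_two_mul_div_cube (ha : 0 < a) (hab : a ≤ b) :
    ∫ r in a..b, (1 - 2 * a ^ 3 / r ^ 3) = b - 2 * a + a ^ 3 / b ^ 2 := by
  rw [integral_eq_sub_of_hasDerivAt (fun r hr => hasDerivAt_add_div_sq (a ^ 3)
    (ha.trans_le (uIcc_of_le hab ▸ hr).1).ne') (intervalIntegrable_one_sub_two_mul_div_cube ha hab)]
  have hb : b ≠ 0 := (ha.trans_le hab).ne'
  field_simp
  ring

theorem sub_two_mul_le_integral_sq {f : ℝ → ℝ} (ha : 0 < a) (hab : a ≤ b)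
    (hf : ContinuousOn f (Icc 0 b)) (hlow : ∀ r ∈ Icc a b, 1 - a ^ 3 / r ^ 3 ≤ f r) :
    b - 2 * a ≤ ∫ r in 0..b, f r ^ 2 := by
  have hsq : ContinuousOn (fun r => f r ^ 2) (Icc 0 b) := hf.pow 2
  have hsq_0a : IntervalIntegrable (fun r => f r ^ 2) volume 0 a :=
    (hsq.mono (uIcc_of_le ha.le ▸ Icc_subset_Icc le_rfl hab)).intervalIntegrable
  have hsq_ab : IntervalIntegrable (fun r => f r ^ 2) volume a b :=
    (hsq.mono (uIcc_of_le hab ▸ Icc_subset_Icc ha.le le_rfl)).intervalIntegrable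
  have hpointwise : ∀ r ∈ Icc a b, 1 - 2 * a ^ 3 / r ^ 3 ≤ f r ^ 2 := fun r hr => by
    have hr0 : 0 < r := ha.trans_le hr.1
    have hle : 0 ≤ 1 - a ^ 3 / r ^ 3 := by
      rw [sub_nonneg]
      exact div_le_one_of_le₀ (pow_le_pow_left₀ ha.le hr.1 3) (by positivity)
    calc 1 - 2 * a ^ 3 / r ^ 3 ≤ (1 - a ^ 3 / r ^ 3) ^ 2 := by
          rw [mul_div_assoc]
          nlinarith [sq_nonneg (a ^ 3 / r ^ 3)]
      _ ≤ f r ^ 2 := pow_le_pow_left₀ hle (hlow r hr) 2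
  calc b - 2 * a ≤ ∫ r in a..b, (1 - 2 * a ^ 3 / r ^ 3) := by
        rw [integral_one_sub_two_mul_div_cube ha hab]
        have hb : 0 < b := ha.trans_le hab
        linarith [show 0 ≤ a ^ 3 / b ^ 2 by positivity]
    _ ≤ ∫ r in a..b, f r ^ 2 :=
        integral_mono_on hab (intervalIntegrable_one_sub_two_mul_div_cube ha hab) hsq_ab hpointwise
    _ ≤ (∫ r in 0..a, f r ^ 2) + ∫ r in a..b, f r ^ 2 :=
        le_add_of_nonneg_left (integral_nonneg ha.le fun r _ => sq_nonneg (f r))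
    _ = ∫ r in 0..b, f r ^ 2 := integral_add_adjacent_intervals hsq_0a hsq_ab

end

theorem stmt_10_general (a b : ℝ) (ha : 0 < a) (hab : a ≤ b) (f f' : ℝ → ℝ)
    (hderiv : ∀ r ∈ Set.Icc (0:ℝ) b, HasDerivAt f (f' r) r)
    (hcont : ContinuousOn f' (Set.Icc (0:ℝ) b))
    (hfb : f b = 1)
    (hlow : ∀ r ∈ Set.Icc a b, 1 - a ^ 3 / r ^ 3 ≤ f r) :
    ∫ r in (0:ℝ)..b, r * f r * f' r ≤ a := by
  have hIcc : Icc 0 b = uIcc 0 b := (uIcc_of_le (ha.le.trans hab)).symm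
  rw [hIcc] at hderiv hcont
  have hidentity := integral_sq_add_two_mul_integral_mul_mul_deriv hderiv hcont
  have hlower := sub_two_mul_le_integral_sq ha hab
    (fun r hr => (hderiv r (hIcc ▸ hr)).continuousAt.continuousWithinAt) hlow
  rw [hfb] at hidentity
  linarith

theorem stmt_10 (a b : ℝ) (ha : 0 < a) (hab : a ≤ b) (f f' : ℝ → ℝ)
    (hderiv : ∀ r ∈ Set.Icc (0:ℝ) b, HasDerivAt f (f' r) r)
    (hcont : ContinuousOn f' (Set.Icc (0:ℝ) b))
    (hbounds : ∀ r ∈ Set.Icc (0:ℝ) b, 0 ≤ f r ∧ f r ≤ 1)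
    (hfb : f b = 1)
    (hlow : ∀ r ∈ Set.Icc a b, 1 - a ^ 3 / r ^ 3 ≤ f r) :
    ∫ r in (0:ℝ)..b, r * f r * f' r ≤ a :=
  stmt_10_general a b ha hab f f' hderiv hcont hfb hlow
end

section
/- There exists a constant C > 0 such that for every integer M ≥ 2, ∫_0^{2π} | Σ_{k=0}^{M} k e^{ikx} | dx ≤ C · M · log M. -/
/-!
The reflection `x ↦ 2π - x` conjugates the sum, so the integral over `[0, 2π]` is twice the one
over `[0, π]`. On `[0, 1/M]` the sum is bounded by `(M + 1) M`. On `[1/M, π]`, summing the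
arithmetico-geometric series with `q = e^{ix}` gives `|∑ k qᵏ| ≤ (M + 1)/|q - 1| + 2/|q - 1|²`, and
Jordan's inequality `|e^{ix} - 1| ≥ 2x/π` turns this into `12M/x`, whose integral is
`12 M log (π M)`.
-/

open Complex Finset
open scoped Real

theorem sub_one_mul_sum_range_natCast_mul_pow {R : Type*} [CommRing R] (q : R) (M : ℕ) :
    (q - 1) * ∑ k ∈ range (M + 1), (k : R) * q ^ k
      = M * q ^ (M + 1) - ∑ k ∈ range (M + 1), q ^ k + 1 := by
  induction M with
  | zero => simp
  | succ n ih =>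
    rw [sum_range_succ _ (n + 1), sum_range_succ _ (n + 1)]
    push_cast
    linear_combination ih

section NormedField

variable {𝕜 : Type*} [NormedField 𝕜] {q : 𝕜}

theorem norm_natCast_mul_pow_le (hq : ‖q‖ ≤ 1) (n k : ℕ) : ‖(n : 𝕜) * q ^ k‖ ≤ n := by
  rw [norm_mul, norm_pow]
  calc ‖(n : 𝕜)‖ * ‖q‖ ^ k ≤ n * 1 := by
        gcongr
        · simpa using norm_nsmul_le (n := n) (a := (1 : 𝕜))
        · exact pow_le_one₀ (norm_nonneg q) hq
    _ = n := mul_one _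

theorem norm_sum_range_natCast_mul_pow_le (hq : ‖q‖ ≤ 1) (M : ℕ) :
    ‖∑ k ∈ range (M + 1), (k : 𝕜) * q ^ k‖ ≤ (M + 1) * M := by
  calc ‖∑ k ∈ range (M + 1), (k : 𝕜) * q ^ k‖
      ≤ ∑ k ∈ range (M + 1), ‖(k : 𝕜) * q ^ k‖ := norm_sum_le _ _
    _ ≤ ∑ _k ∈ range (M + 1), (M : ℝ) := by
      refine sum_le_sum fun k hk => (norm_natCast_mul_pow_le hq k k).trans ?_
      exact_mod_cast Nat.lt_succ_iff.mp (mem_range.mp hk)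
    _ = (M + 1) * M := by simp

theorem norm_geom_sum_le (hq : ‖q‖ ≤ 1) (hq1 : q ≠ 1) (n : ℕ) :
    ‖∑ k ∈ range n, q ^ k‖ ≤ 2 / ‖q - 1‖ := by
  rw [geom_sum_eq hq1, norm_div]
  gcongr
  calc ‖q ^ n - 1‖ ≤ ‖q ^ n‖ + ‖(1 : 𝕜)‖ := norm_sub_le _ _
    _ ≤ 2 := by rw [norm_pow, norm_one]; linarith [pow_le_one₀ (norm_nonneg q) hq (n := n)]

theorem norm_sum_range_natCast_mul_pow_le_of_ne_one (hq : ‖q‖ ≤ 1) (hq1 : q ≠ 1) (M : ℕ) :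
    ‖∑ k ∈ range (M + 1), (k : 𝕜) * q ^ k‖ ≤ (M + 1) / ‖q - 1‖ + 2 / ‖q - 1‖ ^ 2 := by
  have hd : 0 < ‖q - 1‖ := norm_pos_iff.mpr (sub_ne_zero.mpr hq1)
  have hnum : ‖(M : 𝕜) * q ^ (M + 1) - ∑ k ∈ range (M + 1), q ^ k + 1‖
      ≤ M + 2 / ‖q - 1‖ + 1 :=
    (norm_add_le _ _).trans <| add_le_add ((norm_sub_le _ _).trans <|
      add_le_add (norm_natCast_mul_pow_le hq _ _) (norm_geom_sum_le hq hq1 _)) norm_one.le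
  calc ‖∑ k ∈ range (M + 1), (k : 𝕜) * q ^ k‖
      = ‖(M : 𝕜) * q ^ (M + 1) - ∑ k ∈ range (M + 1), q ^ k + 1‖ / ‖q - 1‖ := by
        rw [← sub_one_mul_sum_range_natCast_mul_pow, norm_mul, mul_div_cancel_left₀ _ hd.ne']
    _ ≤ (M + 2 / ‖q - 1‖ + 1) / ‖q - 1‖ := by gcongr
    _ = (M + 1) / ‖q - 1‖ + 2 / ‖q - 1‖ ^ 2 := by field_simp; ring

end NormedField

theorem mul_abs_le_norm_exp_I_mul_ofReal_sub_one {x : ℝ} (hx : |x| ≤ π) :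
    2 / π * |x| ≤ ‖exp (I * x) - 1‖ := by
  have hsin := Real.mul_abs_le_abs_sin (x := x / 2) (by rw [abs_div, abs_two]; linarith)
  rw [norm_exp_I_mul_ofReal_sub_one, norm_mul, Real.norm_eq_abs, Real.norm_eq_abs, abs_two]
  rw [abs_div, abs_two] at hsin
  linarith

/-- `-i` times the derivative of the Dirichlet-type kernel `∑_{k ≤ M} e^{ikx}`. -/
noncomputable def derivDirichletKernel (M : ℕ) (x : ℝ) : ℂ :=
  ∑ k ∈ range (M + 1), (k : ℂ) * exp (I * k * x)

namespace derivDirichletKernel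

theorem eq_sum_pow (M : ℕ) (x : ℝ) :
    derivDirichletKernel M x = ∑ k ∈ range (M + 1), (k : ℂ) * exp (I * x) ^ k := by
  refine sum_congr rfl fun k _ => ?_
  rw [← exp_nat_mul]
  ring_nf

theorem continuous (M : ℕ) : Continuous (derivDirichletKernel M) := by
  unfold derivDirichletKernel; fun_prop

theorem norm_le (M : ℕ) (x : ℝ) : ‖derivDirichletKernel M x‖ ≤ (M + 1) * M := by
  rw [eq_sum_pow]
  exact norm_sum_range_natCast_mul_pow_le (norm_exp_I_mul_ofReal x).le M

theorem norm_two_pi_sub (M : ℕ) (x : ℝ) :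
    ‖derivDirichletKernel M (2 * π - x)‖ = ‖derivDirichletKernel M x‖ := by
  have hconj : exp (I * ↑(2 * π - x)) = (starRingEnd ℂ) (exp (I * x)) := by
    rw [← exp_conj, map_mul, conj_I, conj_ofReal]
    push_cast
    rw [mul_sub, exp_sub, mul_comm I, exp_two_pi_mul_I, one_div, ← exp_neg, neg_mul]
  rw [eq_sum_pow, eq_sum_pow, hconj, ← norm_conj, map_sum]
  simp only [map_mul, map_pow, map_natCast, conj_conj]

theorem norm_le_div {M : ℕ} {x : ℝ} (hMx : 1 ≤ M * x) (hxπ : x ≤ π) :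
    ‖derivDirichletKernel M x‖ ≤ 12 * M / x := by
  have hx : 0 < x := pos_of_mul_pos_right (one_pos.trans_le hMx) M.cast_nonneg
  have hM : (1 : ℝ) ≤ M := by
    exact_mod_cast Nat.one_le_iff_ne_zero.mpr (by rintro rfl; norm_num at hMx)
  set d := ‖exp (I * x) - 1‖
  have hxd : x / 2 ≤ d := by
    have hjordan := mul_abs_le_norm_exp_I_mul_ofReal_sub_one (x := x) (by rwa [abs_of_pos hx])
    rw [abs_of_pos hx] at hjordan
    refine le_trans ?_ hjordan
    rw [div_mul_eq_mul_div, le_div_iff₀ Real.pi_pos]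
    nlinarith [Real.pi_le_four]
  have hd : 0 < d := by linarith
  have hq1 : exp (I * x) ≠ 1 := fun h => by simp [d, h] at hd
  rw [eq_sum_pow]
  refine (norm_sum_range_natCast_mul_pow_le_of_ne_one (norm_exp_I_mul_ofReal x).le hq1 M).trans ?_
  calc ((M : ℝ) + 1) / d + 2 / d ^ 2 ≤ (M + 1) / (x / 2) + 2 / (x / 2) ^ 2 := by gcongr
    _ = (2 * (M + 1) + 8 / x) / x := by field_simp; ring
    _ ≤ (2 * (2 * M) + 8 * M) / x := by
      gcongr
      · linarith
      · rwa [div_le_iff₀ hx, mul_assoc, le_mul_iff_one_le_right (by norm_num)]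
    _ = 12 * M / x := by ring

theorem intervalIntegrable_norm (M : ℕ) (a b : ℝ) :
    IntervalIntegrable (fun x => ‖derivDirichletKernel M x‖) MeasureTheory.volume a b :=
  ((continuous M).norm).intervalIntegrable a b

theorem integral_norm_zero_two_pi (M : ℕ) :
    ∫ x in 0..2 * π, ‖derivDirichletKernel M x‖ = 2 * ∫ x in 0..π, ‖derivDirichletKernel M x‖ := by
  have hreflect : ∫ x in π..2 * π, ‖derivDirichletKernel M x‖
      = ∫ x in 0..π, ‖derivDirichletKernel M x‖ := by
    calc ∫ x in π..2 * π, ‖derivDirichletKernel M x‖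
        = ∫ x in π..2 * π, ‖derivDirichletKernel M (2 * π - x)‖ := by simp only [norm_two_pi_sub]
      _ = ∫ x in 0..π, ‖derivDirichletKernel M x‖ := by
        rw [intervalIntegral.integral_comp_sub_left (fun x => ‖derivDirichletKernel M x‖)]
        ring_nf
  rw [← intervalIntegral.integral_add_adjacent_intervals (b := π) (intervalIntegrable_norm M _ _)
    (intervalIntegrable_norm M _ _), hreflect, two_mul]

theorem integral_norm_zero_inv_le {M : ℕ} (hM : 0 < M) :
    ∫ x in 0..(M : ℝ)⁻¹, ‖derivDirichletKernel M x‖ ≤ M + 1 := by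
  have hM' : (0 : ℝ) < M := Nat.cast_pos.mpr hM
  calc ∫ x in 0..(M : ℝ)⁻¹, ‖derivDirichletKernel M x‖
      ≤ ∫ _x in 0..(M : ℝ)⁻¹, ((M : ℝ) + 1) * M :=
        intervalIntegral.integral_mono_on (by positivity) (intervalIntegrable_norm M _ _)
          intervalIntegrable_const fun x _ => norm_le M x
    _ = M + 1 := by simp [hM'.ne']

theorem integral_norm_inv_pi_le {M : ℕ} (hM : 0 < M) :
    ∫ x in (M : ℝ)⁻¹..π, ‖derivDirichletKernel M x‖ ≤ 12 * M * Real.log (π * M) := by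
  have hM' : (1 : ℝ) ≤ M := Nat.one_le_cast.mpr hM
  have hinv : (M : ℝ)⁻¹ ≤ π := (inv_le_one_of_one_le₀ hM').trans (by linarith [Real.pi_gt_three])
  have hinv0 : 0 < (M : ℝ)⁻¹ := by positivity
  calc ∫ x in (M : ℝ)⁻¹..π, ‖derivDirichletKernel M x‖
      ≤ ∫ x in (M : ℝ)⁻¹..π, 12 * M * x⁻¹ := by
        refine intervalIntegral.integral_mono_on hinv (intervalIntegrable_norm M _ _) ?_ ?_
        · refine (continuousOn_const.mul (continuousOn_inv₀.mono ?_)).intervalIntegrable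
          intro x hx
          exact (hinv0.trans_le (Set.uIcc_of_le hinv ▸ hx).1).ne'
        · intro x hx
          refine (norm_le_div ?_ hx.2).trans_eq (div_eq_mul_inv _ _)
          rw [← inv_mul_le_iff₀ (by positivity), mul_one]
          exact hx.1
    _ = 12 * M * Real.log (π * M) := by
      rw [intervalIntegral.integral_const_mul, integral_inv_of_pos hinv0 Real.pi_pos, div_inv_eq_mul]

theorem integral_norm_le {M : ℕ} (hM : 0 < M) :
    ∫ x in 0..2 * π, ‖derivDirichletKernel M x‖ ≤ 2 * (M + 1) + 24 * M * Real.log (π * M) := by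
  rw [integral_norm_zero_two_pi, ← intervalIntegral.integral_add_adjacent_intervals
    (b := (M : ℝ)⁻¹) (intervalIntegrable_norm M _ _) (intervalIntegrable_norm M _ _)]
  linarith [integral_norm_zero_inv_le hM, integral_norm_inv_pi_le hM]

end derivDirichletKernel

theorem log_pi_mul_le_three_mul_log {x : ℝ} (hx : 2 ≤ x) : Real.log (π * x) ≤ 3 * Real.log x := by
  rw [show (3 : ℝ) = (3 : ℕ) by norm_num, ← Real.log_pow]
  refine Real.log_le_log (by positivity) ?_
  have hx0 : 0 ≤ x := by linarith
  calc π * x ≤ 4 * x := by gcongr; exact Real.pi_le_four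
    _ ≤ x ^ 3 := by nlinarith [mul_le_mul hx hx (by norm_num) hx0]

theorem stmt_12 : ∃ C : ℝ, 0 < C ∧ ∀ M : ℕ, 2 ≤ M →
    (∫ x in (0:ℝ)..(2 * Real.pi),
        ‖∑ k ∈ Finset.range (M + 1), (k : ℂ) * Complex.exp (Complex.I * k * x)‖)
      ≤ C * M * Real.log M := by
  refine ⟨78, by norm_num, fun M hM => ?_⟩
  have hM' : (2 : ℝ) ≤ M := by exact_mod_cast hM
  have hlog : 1 / 2 ≤ Real.log M :=
    (by linarith [Real.log_two_gt_d9] : 1 / 2 ≤ Real.log 2).trans (Real.log_le_log two_pos hM')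
  have hlogpi := log_pi_mul_le_three_mul_log hM'
  refine (derivDirichletKernel.integral_norm_le (M := M) (by omega)).trans ?_
  nlinarith
end

section
/- There exists a constant C > 0 such that for every integer M ≥ 2, ∫_0^{2π} | Σ_{k=0}^{M} k² e^{ikx} | dx ≤ C · M² · log M. -/
/-!
Write `q = e^{ix}`, so that the sum is `∑ k² qᵏ`. Abel summation against the partial geometric
sums, which are bounded by `2 / |q - 1|`, gives `|∑ k² qᵏ| ≤ 4M² / |q - 1|`, and Jordan's
inequality `|e^{ix} - 1| = 2 sin (x/2) ≥ 2x/π` turns this into `2πM² / x` on `(0, π]`. With the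
trivial bound `(M + 1) M²` on `[0, 1/M]`, the integral over `[0, π]` is `O(M² log M)`; the
reflection `x ↦ 2π - x` conjugates the sum, so `[π, 2π]` contributes the same.
-/

open Finset Real intervalIntegral

section AbelSummation

variable {E : Type*} [NormedAddCommGroup E] [NormedSpace ℝ E] {a : ℕ → ℝ} {g : ℕ → E}

theorem norm_sum_range_succ_smul_le_of_norm_le_one (ha : Monotone a) (ha0 : 0 ≤ a 0)
    (hg : ∀ i, ‖g i‖ ≤ 1) (n : ℕ) :
    ‖∑ i ∈ range (n + 1), a i • g i‖ ≤ (n + 1) * a n := by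
  calc ‖∑ i ∈ range (n + 1), a i • g i‖ ≤ ∑ i ∈ range (n + 1), a n := by
        refine (norm_sum_le _ _).trans (sum_le_sum fun i hi => ?_)
        rw [norm_smul, norm_of_nonneg (ha0.trans (ha i.zero_le))]
        exact (mul_le_of_le_one_right (ha0.trans (ha i.zero_le)) (hg i)).trans
          (ha (Nat.lt_succ_iff.1 (mem_range.1 hi)))
    _ = (n + 1) * a n := by simp

theorem norm_sum_range_succ_smul_le_of_monotone (ha : Monotone a) (ha0 : 0 ≤ a 0) {B : ℝ}
    (hg : ∀ n, ‖∑ i ∈ range n, g i‖ ≤ B) (n : ℕ) :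
    ‖∑ i ∈ range (n + 1), a i • g i‖ ≤ 2 * a n * B := by
  have hB : 0 ≤ B := (norm_nonneg _).trans (hg 0)
  have han : 0 ≤ a n := ha0.trans (ha n.zero_le)
  rw [sum_range_by_parts, Nat.add_sub_cancel]
  calc _ ≤ ‖a n • ∑ i ∈ range (n + 1), g i‖
          + ‖∑ i ∈ range n, (a (i + 1) - a i) • ∑ j ∈ range (i + 1), g j‖ := norm_sub_le _ _
    _ ≤ a n * B + ∑ i ∈ range n, (a (i + 1) - a i) * B := by
        gcongr
        · rw [norm_smul, norm_of_nonneg han]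
          exact mul_le_mul_of_nonneg_left (hg _) han
        · refine (norm_sum_le _ _).trans (sum_le_sum fun i _ => ?_)
          have hi : 0 ≤ a (i + 1) - a i := sub_nonneg.2 (ha i.le_succ)
          rw [norm_smul, norm_of_nonneg hi]
          exact mul_le_mul_of_nonneg_left (hg _) hi
    _ = (2 * a n - a 0) * B := by rw [← sum_mul, sum_range_sub]; ring
    _ ≤ 2 * a n * B := by nlinarith

end AbelSummation

theorem norm_geom_sum_le_two_div {𝕜 : Type*} [NormedDivisionRing 𝕜] {q : 𝕜} (hq : ‖q‖ ≤ 1)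
    (hq1 : q ≠ 1) (n : ℕ) : ‖∑ i ∈ range n, q ^ i‖ ≤ 2 / ‖q - 1‖ := by
  rw [geom_sum_eq hq1, norm_div]
  gcongr
  calc ‖q ^ n - 1‖ ≤ ‖q‖ ^ n + ‖(1 : 𝕜)‖ := (norm_sub_le _ _).trans_eq (by rw [norm_pow])
    _ ≤ 2 := by rw [norm_one]; linarith [pow_le_one₀ (norm_nonneg q) hq (n := n)]

theorem two_div_pi_mul_le_norm_exp_I_mul_sub_one {x : ℝ} (h0 : 0 ≤ x) (hx : x ≤ π) :
    2 / π * x ≤ ‖Complex.exp (Complex.I * x) - 1‖ := by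
  have hsin : 2 / π * (x / 2) ≤ sin (x / 2) := mul_le_sin (by positivity) (by linarith)
  rw [Complex.norm_exp_I_mul_ofReal_sub_one, norm_mul, Real.norm_two,
    norm_of_nonneg (sin_nonneg_of_nonneg_of_le_pi (by positivity) (by linarith))]
  linarith

theorem intervalIntegral_le_mul_add_mul_log {f : ℝ → ℝ} {A B m b : ℝ} (hm : 0 < m)
    (hmb : m ≤ b) (hf : IntervalIntegrable f MeasureTheory.volume 0 b)
    (hA : ∀ x ∈ Set.Icc 0 m, f x ≤ A) (hB : ∀ x ∈ Set.Icc m b, f x ≤ B / x) :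
    ∫ x in 0..b, f x ≤ A * m + B * log (b / m) := by
  have hm_mem : m ∈ Set.uIcc 0 b := Set.mem_uIcc_of_le hm.le hmb
  have hf0m := hf.mono_set (Set.uIcc_subset_uIcc Set.left_mem_uIcc hm_mem)
  have hfmb := hf.mono_set (Set.uIcc_subset_uIcc hm_mem Set.right_mem_uIcc)
  have hpos : ∀ x ∈ Set.uIcc m b, 0 < x := fun x hx => hm.trans_le (Set.uIcc_of_le hmb ▸ hx).1
  rw [← integral_add_adjacent_intervals hf0m hfmb]
  gcongr
  · calc ∫ x in 0..m, f x ≤ ∫ _ in 0..m, A :=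
          integral_mono_on hm.le hf0m intervalIntegrable_const hA
      _ = A * m := by simp [mul_comm]
  · have hinv : IntervalIntegrable (fun x => B * x⁻¹) MeasureTheory.volume m b :=
      (intervalIntegrable_inv (fun x hx => (hpos x hx).ne') continuousOn_id).const_mul B
    calc ∫ x in m..b, f x ≤ ∫ x in m..b, B * x⁻¹ := integral_mono_on hmb hfmb hinv hB
      _ = B * log (b / m) := by
          rw [integral_const_mul, integral_inv fun h => (hpos 0 h).false]

noncomputable def sqKernel (M : ℕ) (x : ℝ) : ℂ :=
  ∑ k ∈ range (M + 1), (k : ℂ) ^ 2 * Complex.exp (Complex.I * k * x)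

theorem continuous_sqKernel (M : ℕ) : Continuous (sqKernel M) := by
  unfold sqKernel
  fun_prop

theorem sqKernel_eq_sum_smul_pow (M : ℕ) (x : ℝ) :
    sqKernel M x = ∑ k ∈ range (M + 1), ((k : ℝ) ^ 2) • Complex.exp (Complex.I * x) ^ k := by
  refine sum_congr rfl fun k _ => ?_
  rw [← Complex.exp_nat_mul, Complex.real_smul]
  push_cast
  ring_nf

theorem sqKernel_two_pi_sub (M : ℕ) (x : ℝ) :
    sqKernel M (2 * π - x) = starRingEnd ℂ (sqKernel M x) := by
  rw [sqKernel, sqKernel, map_sum]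
  refine sum_congr rfl fun k _ => ?_
  have h : Complex.I * k * ↑(2 * π - x)
      = starRingEnd ℂ (Complex.I * k * x) + k * (2 * π * Complex.I) := by
    simp only [map_mul, Complex.conj_I, Complex.conj_natCast, Complex.conj_ofReal]
    push_cast
    ring
  rw [map_mul, map_pow, Complex.conj_natCast, ← Complex.exp_conj, h, Complex.exp_add,
    Complex.exp_nat_mul_two_pi_mul_I, mul_one]

theorem monotone_natCast_sq : Monotone fun k : ℕ => (k : ℝ) ^ 2 :=
  fun _ _ hij => pow_le_pow_left₀ (Nat.cast_nonneg _) (Nat.cast_le.2 hij) 2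

theorem norm_sqKernel_le (M : ℕ) (x : ℝ) : ‖sqKernel M x‖ ≤ (M + 1) * M ^ 2 := by
  rw [sqKernel_eq_sum_smul_pow]
  exact norm_sum_range_succ_smul_le_of_norm_le_one monotone_natCast_sq (sq_nonneg _)
    (fun k => by rw [norm_pow, Complex.norm_exp_I_mul_ofReal, one_pow]) M

theorem norm_sqKernel_le_div {x : ℝ} (h0 : 0 < x) (hx : x ≤ π) (M : ℕ) :
    ‖sqKernel M x‖ ≤ 2 * π * M ^ 2 / x := by
  set q := Complex.exp (Complex.I * x)
  have hq : ‖q‖ = 1 := Complex.norm_exp_I_mul_ofReal x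
  have hlow : 2 / π * x ≤ ‖q - 1‖ := two_div_pi_mul_le_norm_exp_I_mul_sub_one h0.le hx
  have hq1 : q ≠ 1 := fun h => by
    rw [h, sub_self, norm_zero] at hlow
    linarith [show 0 < 2 / π * x by positivity]
  calc ‖sqKernel M x‖ ≤ 2 * (M : ℝ) ^ 2 * (2 / ‖q - 1‖) := by
        rw [sqKernel_eq_sum_smul_pow]
        exact norm_sum_range_succ_smul_le_of_monotone monotone_natCast_sq (sq_nonneg _)
          (norm_geom_sum_le_two_div hq.le hq1) M
    _ ≤ 2 * (M : ℝ) ^ 2 * (2 / (2 / π * x)) :=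
        mul_le_mul_of_nonneg_left (div_le_div_of_nonneg_left zero_le_two (by positivity) hlow)
          (by positivity)
    _ = 2 * π * M ^ 2 / x := by field_simp

theorem integral_norm_sqKernel_eq (M : ℕ) :
    ∫ x in 0..2 * π, ‖sqKernel M x‖ = 2 * ∫ x in 0..π, ‖sqKernel M x‖ := by
  have hint : ∀ a b, IntervalIntegrable (fun x => ‖sqKernel M x‖) MeasureTheory.volume a b :=
    fun a b => (continuous_sqKernel M).norm.intervalIntegrable a b
  have hreflect : ∫ x in π..2 * π, ‖sqKernel M x‖ = ∫ x in 0..π, ‖sqKernel M x‖ := by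
    have h := integral_comp_sub_left (fun x => ‖sqKernel M x‖) (2 * π) (a := 0) (b := π)
    simp only [sqKernel_two_pi_sub, Complex.norm_conj, sub_zero,
      show 2 * π - π = π by ring] at h
    exact h.symm
  rw [← integral_add_adjacent_intervals (hint 0 π) (hint π (2 * π)), hreflect, two_mul]

theorem integral_norm_sqKernel_le {M : ℕ} (hM : 1 ≤ M) :
    ∫ x in 0..2 * π, ‖sqKernel M x‖ ≤ 2 * ((M + 1) * M + 2 * π * M ^ 2 * log (π * M)) := by
  have hM' : (1 : ℝ) ≤ M := by exact_mod_cast hM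
  have hM0 : (0 : ℝ) < M := by linarith
  have hm : (M : ℝ)⁻¹ ≤ π := (inv_le_one_of_one_le₀ hM').trans (by linarith [pi_gt_three])
  rw [integral_norm_sqKernel_eq]
  gcongr
  refine (intervalIntegral_le_mul_add_mul_log (inv_pos.2 hM0) hm
    ((continuous_sqKernel M).norm.intervalIntegrable 0 π) (fun x _ => norm_sqKernel_le M x)
    (fun x hx => norm_sqKernel_le_div ((inv_pos.2 hM0).trans_le hx.1) hx.2 M)).trans_eq ?_
  rw [div_inv_eq_mul, sq, ← mul_assoc, mul_inv_cancel_right₀ hM0.ne']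

theorem stmt_13 : ∃ C : ℝ, 0 < C ∧ ∀ M : ℕ, 2 ≤ M →
    (∫ x in (0:ℝ)..(2 * Real.pi),
        ‖∑ k ∈ Finset.range (M + 1), (k : ℂ) ^ 2 * Complex.exp (Complex.I * k * x)‖)
      ≤ C * M ^ 2 * Real.log M := by
  refine ⟨8 + 12 * π, by positivity, fun M hM => ?_⟩
  have hM2 : (2 : ℝ) ≤ M := by exact_mod_cast hM
  have hlogM : 1 / 2 ≤ log M := by
    linarith [log_two_gt_d9, log_le_log two_pos hM2]
  have hlogπM : log (π * M) ≤ 3 * log M := by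
    calc log (π * M) ≤ log (M ^ 3) := log_le_log (by positivity) (by
          rw [pow_succ]; gcongr; nlinarith [pi_lt_four])
      _ = 3 * log M := by rw [log_pow]; norm_num
  calc _ ≤ 2 * ((M + 1) * M + 2 * π * M ^ 2 * log (π * M)) :=
        integral_norm_sqKernel_le (by omega)
    _ ≤ (8 + 12 * π) * M ^ 2 * log M := by
        nlinarith [pi_pos, sq_nonneg (M : ℝ), mul_le_mul_of_nonneg_left hlogπM
          (by positivity : (0 : ℝ) ≤ 2 * π * M ^ 2)]
end
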